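/- BEDPP safe rule for the elastic net (Theorem 4.1): assume the standardization condition holds, let 0 < α ≤ 1, let λ_m = max_{1≤j≤p} |x_jᵀy| / (αn) > 0, and let j_* be an index attaining this maximum with x_* = x_{j_*}. For any λ with 0 < λ ≤ λ_m and any index j ≠ j_* (so x_j ≠ x_*), if β̂(λ, α) is a minimizer of e_{λ,α} and | (λ_m + λ) x_jᵀy − (λ_m − λ) · ( sign(x_*ᵀy) · αλ_m / (1 + λ(1−α)) ) · x_jᵀx_* | < 2nαλλ_m − (λ_m − λ) √( n‖y‖²(1 + λ(1−α)) − n²α²λ_m² ), then β̂_j(λ, α) = 0. -/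

import Mathlib

open Finset

private lemma auxEps (a c ε₀ : ℝ) (hc : 0 ≤ c) (hε₀ : 0 < ε₀)
    (h : ∀ ε : ℝ, 0 < ε → ε ≤ ε₀ → a * ε ≤ c * ε ^ 2) : a ≤ 0 := by
  by_contra hcon
  push_neg at hcon
  have hc1 : (0:ℝ) < c + 1 := by linarith
  have hq : 0 < a / (2 * (c + 1)) := by positivity
  set ε := min ε₀ (a / (2 * (c + 1))) with hε
  have hε1 : 0 < ε := lt_min hε₀ hq
  have h2 := h ε hε1 (min_le_left _ _)
  have h3 : ε ≤ a / (2 * (c + 1)) := min_le_right _ _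
  have h4 : c * ε ≤ c * (a / (2 * (c + 1))) := by nlinarith
  have h5 : c * (a / (2 * (c + 1))) < a := by
    rw [mul_div_assoc', div_lt_iff₀ (by linarith)]
    nlinarith
  nlinarith [mul_pos hε1 hε1]

private lemma sum_update_f {p : ℕ} (βh : Fin p → ℝ) (k : Fin p) (b : ℝ) (f : ℝ → ℝ) :
    ∑ l, f (Function.update βh k b l) = (∑ l, f (βh l)) + (f b - f (βh k)) := by
  have h : ∀ l : Fin p, f (Function.update βh k b l)
      = f (βh l) + (if l = k then f b - f (βh k) else 0) := by
    intro l
    rcases eq_or_ne l k with rfl | hlk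
    · simp
    · simp [Function.update_of_ne hlk, hlk]
  simp only [h]
  rw [Finset.sum_add_distrib, Finset.sum_ite_eq' Finset.univ k]
  simp

private lemma sum_update_mul {p : ℕ} (βh v : Fin p → ℝ) (k : Fin p) (b : ℝ) :
    ∑ l, v l * Function.update βh k b l = (∑ l, v l * βh l) + v k * (b - βh k) := by
  have h : ∀ l : Fin p, v l * Function.update βh k b l
      = v l * βh l + (if l = k then v k * (b - βh k) else 0) := by
    intro l
    rcases eq_or_ne l k with rfl | hlk
    · simp; ring
    · simp [Function.update_of_ne hlk, hlk]
  simp only [h]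
  rw [Finset.sum_add_distrib, Finset.sum_ite_eq' Finset.univ k]
  simp

private noncomputable def dotP {n p : ℕ} (f g : (Fin n ⊕ Fin p) → ℝ) : ℝ := ∑ z, f z * g z

private lemma dotP_split {n p : ℕ} (f g : (Fin n ⊕ Fin p) → ℝ) :
    dotP f g = (∑ i, f (Sum.inl i) * g (Sum.inl i)) + ∑ l, f (Sum.inr l) * g (Sum.inr l) :=
  Fintype.sum_sum_type _

private lemma dotP_self_nonneg {n p : ℕ} (f : (Fin n ⊕ Fin p) → ℝ) : 0 ≤ dotP f f :=
  Finset.sum_nonneg fun z _ => mul_self_nonneg _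

private lemma dotP_CS {n p : ℕ} (f g : (Fin n ⊕ Fin p) → ℝ) :
    (dotP f g) ^ 2 ≤ dotP f f * dotP g g := by
  have := Finset.sum_mul_sq_le_sq_mul_sq Finset.univ f g
  simpa [dotP, pow_two] using this

private lemma dotP_comb {n p : ℕ} (f1 f2 f3 : (Fin n ⊕ Fin p) → ℝ) (p1 p2 p3 q1 q2 q3 : ℝ) :
    dotP (fun z => p1 * f1 z + p2 * f2 z + p3 * f3 z) (fun z => q1 * f1 z + q2 * f2 z + q3 * f3 z)
      = p1*q1 * dotP f1 f1 + p2*q2 * dotP f2 f2 + p3*q3 * dotP f3 f3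
        + (p1*q2 + p2*q1) * dotP f1 f2 + (p1*q3 + p3*q1) * dotP f1 f3
        + (p2*q3 + p3*q2) * dotP f2 f3 := by
  simp only [dotP, Finset.mul_sum, ← Finset.sum_add_distrib]
  exact Finset.sum_congr rfl fun z _ => by ring

private lemma dotP_comb_left {n p : ℕ} (g f1 f2 f3 : (Fin n ⊕ Fin p) → ℝ) (q1 q2 q3 : ℝ) :
    dotP g (fun z => q1 * f1 z + q2 * f2 z + q3 * f3 z)
      = q1 * dotP g f1 + q2 * dotP g f2 + q3 * dotP g f3 := by
  simp only [dotP, Finset.mul_sum, ← Finset.sum_add_distrib]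
  exact Finset.sum_congr rfl fun z _ => by ring

/-- The elastic net objective
`e_{λ,α}(β) = (1/(2n))‖y − Xβ‖² + αλ‖β‖₁ + ((1−α)λ/2)‖β‖²`. -/
noncomputable def enetObj (n p : ℕ) (X : Matrix (Fin n) (Fin p) ℝ) (y : Fin n → ℝ)
    (lam α : ℝ) (β : Fin p → ℝ) : ℝ :=
  (1 / (2 * (n : ℝ))) * ∑ i, (y i - X.mulVec β i) ^ 2 + α * lam * ∑ j, |β j| +
    ((1 - α) * lam / 2) * ∑ j, (β j) ^ 2

set_option maxHeartbeats 2000000 in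
/-- BEDPP safe rule for the elastic net (Theorem 4.1): under standardization, with
`0 < α ≤ 1`, `λ_m = max_j |x_jᵀy|/(αn) > 0` attained at index `j_*` (column `x_*`), for
`0 < λ ≤ λ_m` and `j ≠ j_*`, if
`|(λ_m + λ)x_jᵀy − (λ_m − λ)·(sign(x_*ᵀy)·αλ_m/(1 + λ(1−α)))·x_jᵀx_*|
  < 2nαλλ_m − (λ_m − λ)√(n‖y‖²(1 + λ(1−α)) − n²α²λ_m²)`,
then any minimizer `β̂(λ, α)` of `e_{λ,α}` satisfies `β̂_j(λ, α) = 0`. -/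
theorem bedpp_enet (n p : ℕ) (hn : 0 < n) (hp : 0 < p)
    (X : Matrix (Fin n) (Fin p) ℝ) (y : Fin n → ℝ)
    -- standardization condition
    (hy0 : ∑ i, y i = 0)
    (hx0 : ∀ j, ∑ i, X i j = 0)
    (hx1 : ∀ j, (1 / (n : ℝ)) * ∑ i, (X i j) ^ 2 = 1)
    (α : ℝ) (hα0 : 0 < α) (hα1 : α ≤ 1)
    -- λ_m is the maximum of |x_jᵀy|/(αn), attained at index jstar, and positive
    (lm : ℝ) (hlm : 0 < lm)
    (hub : ∀ j, |∑ i, X i j * y i| / (α * (n : ℝ)) ≤ lm)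
    (jstar : Fin p) (hatt : |∑ i, X i jstar * y i| / (α * (n : ℝ)) = lm)
    (lam : ℝ) (hlam : 0 < lam) (hlamle : lam ≤ lm)
    (βh : Fin p → ℝ)
    (hmin : ∀ β : Fin p → ℝ, enetObj n p X y lam α βh ≤ enetObj n p X y lam α β)
    (j : Fin p) (hj : j ≠ jstar)
    (hrule : |(lm + lam) * (∑ i, X i j * y i) -
        (lm - lam) * (Real.sign (∑ i, X i jstar * y i) * α * lm / (1 + lam * (1 - α))) *
          (∑ i, X i j * X i jstar)| <
      2 * (n : ℝ) * α * lam * lm -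
        (lm - lam) * Real.sqrt ((n : ℝ) * (∑ i, (y i) ^ 2) * (1 + lam * (1 - α)) -
          (n : ℝ) ^ 2 * α ^ 2 * lm ^ 2)) :
    βh j = 0 := by
  classical
  have hn' : (0:ℝ) < n := by exact_mod_cast hn
  have hαn : (0:ℝ) < α * (n:ℝ) := by positivity
  set l2 : ℝ := lam * (1 - α) with hl2def
  have hl2 : 0 ≤ l2 := by rw [hl2def]; nlinarith
  have h1l2 : (0:ℝ) < 1 + l2 := by linarith
  set A : ℝ := (n:ℝ) * α * lam with hAdef
  set B : ℝ := (n:ℝ) * α * lm with hBdef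
  have hA : (0:ℝ) < A := by rw [hAdef]; positivity
  have hB : (0:ℝ) < B := by rw [hBdef]; positivity
  have hAB : A ≤ B := by rw [hAdef, hBdef]; nlinarith
  set aj : ℝ := ∑ i, X i j * y i with hajdef
  set aS : ℝ := ∑ i, X i jstar * y i with haSdef
  set XjXs : ℝ := ∑ i, X i j * X i jstar with hXjXsdef
  set s : ℝ := Real.sign aS with hsdef
  set c : ℝ := s * α * lm / (1 + l2) with hcdef
  clear_value l2 A B aj aS XjXs s c
  -- column norms
  have hXsq : ∀ m, (∑ i, X i m * X i m) = (n:ℝ) := by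
    intro m
    have h := hx1 m
    have hne : (n:ℝ) ≠ 0 := ne_of_gt hn'
    field_simp at h
    calc ∑ i, X i m * X i m = ∑ i, X i m ^ 2 := by
          exact Finset.sum_congr rfl fun i _ => (pow_two _).symm
    _ = (n:ℝ) := h
  set u : Fin p → ℝ := fun k => (∑ i, X i k * (y i - X.mulVec βh i)) - (n:ℝ) * l2 * βh k
    with hudef
  clear_value u
  -- key perturbation inequality
  have key : ∀ (k : Fin p) (t : ℝ), t * u k ≤
      (n:ℝ) * (1 + l2) / 2 * t ^ 2 + A * (|βh k + t| - |βh k|) := by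
    intro k t
    have h1 := hmin (Function.update βh k (βh k + t))
    have hmv : ∀ i, X.mulVec (Function.update βh k (βh k + t)) i
        = X.mulVec βh i + X i k * t := by
      intro i
      simp only [Matrix.mulVec, dotProduct]
      rw [sum_update_mul]
      ring
    have hs1 : ∑ i, (y i - X.mulVec (Function.update βh k (βh k + t)) i) ^ 2
        = (∑ i, (y i - X.mulVec βh i) ^ 2)
          - 2 * t * (∑ i, X i k * (y i - X.mulVec βh i)) + t ^ 2 * (n:ℝ) := by
      rw [show (∑ i, (y i - X.mulVec (Function.update βh k (βh k + t)) i) ^ 2)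
          = ∑ i, ((y i - X.mulVec βh i) ^ 2 - 2 * t * (X i k * (y i - X.mulVec βh i))
              + t ^ 2 * (X i k * X i k)) from
        Finset.sum_congr rfl fun i _ => by rw [hmv i]; ring]
      rw [Finset.sum_add_distrib, Finset.sum_sub_distrib, ← Finset.mul_sum, ← Finset.mul_sum,
        hXsq k]
    have hs2 : ∑ l, |Function.update βh k (βh k + t) l|
        = (∑ l, |βh l|) + (|βh k + t| - |βh k|) :=
      sum_update_f βh k (βh k + t) (fun x => |x|)
    have hs3 : ∑ l, (Function.update βh k (βh k + t) l) ^ 2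
        = (∑ l, (βh l) ^ 2) + ((βh k + t) ^ 2 - (βh k) ^ 2) :=
      sum_update_f βh k (βh k + t) (fun x => x ^ 2)
    have hdiff : enetObj n p X y lam α (Function.update βh k (βh k + t))
        - enetObj n p X y lam α βh
        = (1 / (2 * (n:ℝ))) * (-2 * t * (∑ i, X i k * (y i - X.mulVec βh i)) + t ^ 2 * (n:ℝ))
          + α * lam * (|βh k + t| - |βh k|)
          + (1 - α) * lam / 2 * ((βh k + t) ^ 2 - (βh k) ^ 2) := by
      simp only [enetObj]
      rw [hs1, hs2, hs3]
      ring
    have h4 : 0 ≤ (1 / (2 * (n:ℝ))) * (-2 * t * (∑ i, X i k * (y i - X.mulVec βh i))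
          + t ^ 2 * (n:ℝ))
        + α * lam * (|βh k + t| - |βh k|)
        + (1 - α) * lam / 2 * ((βh k + t) ^ 2 - (βh k) ^ 2) := by
      rw [← hdiff]
      linarith [h1]
    have h5 := mul_le_mul_of_nonneg_left h4 (by positivity : (0:ℝ) ≤ 2 * (n:ℝ))
    rw [mul_zero] at h5
    have e2 : (2 * (n:ℝ)) * ((1 / (2 * (n:ℝ))) * (-2 * t * (∑ i, X i k * (y i - X.mulVec βh i))
          + t ^ 2 * (n:ℝ))
        + α * lam * (|βh k + t| - |βh k|)
        + (1 - α) * lam / 2 * ((βh k + t) ^ 2 - (βh k) ^ 2))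
        = (-2 * t * (∑ i, X i k * (y i - X.mulVec βh i)) + t ^ 2 * (n:ℝ))
          + 2 * (n:ℝ) * (α * lam) * (|βh k + t| - |βh k|)
          + (n:ℝ) * ((1 - α) * lam) * ((βh k + t) ^ 2 - (βh k) ^ 2) := by
      field_simp
    rw [e2] at h5
    simp only [hudef, hAdef, hl2def]
    linarith [h5]
  -- KKT consequences
  have K1 : ∀ k, |u k| ≤ A := by
    intro k
    rw [abs_le]
    constructor
    · have h := auxEps (-(u k) - A) ((n:ℝ) * (1 + l2) / 2) 1 (by positivity) one_pos ?_
      · linarith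
      intro ε hε _
      have hk := key k (-ε)
      have habs : |βh k + -ε| - |βh k| ≤ ε := by
        have h1 : |βh k + -ε| ≤ |βh k| + |(-ε)| := abs_add_le _ _
        rw [abs_neg, abs_of_pos hε] at h1
        linarith
      have h2 := mul_le_mul_of_nonneg_left habs hA.le
      linarith [hk, h2]
    · have h := auxEps (u k - A) ((n:ℝ) * (1 + l2) / 2) 1 (by positivity) one_pos ?_
      · linarith
      intro ε hε _
      have hk := key k ε
      have habs : |βh k + ε| - |βh k| ≤ ε := by
        have h1 : |βh k + ε| ≤ |βh k| + |ε| := abs_add_le _ _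
        rw [abs_of_pos hε] at h1
        linarith
      have h2 := mul_le_mul_of_nonneg_left habs hA.le
      linarith [hk, h2]
  have K2 : ∀ k, βh k ≠ 0 → βh k * u k = |βh k| * A := by
    intro k hk
    rcases lt_or_gt_of_ne hk with hneg | hpos
    · have h : u k + A ≤ 0 := by
        apply auxEps _ ((n:ℝ) * (1 + l2) / 2) (-(βh k)) (by positivity) (by linarith)
        intro ε hε hεle
        have hk2 := key k ε
        have habs : |βh k + ε| - |βh k| = -ε := by
          rw [abs_of_nonpos (by linarith : βh k + ε ≤ 0), abs_of_neg hneg]; ring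
        rw [habs] at hk2
        linarith [hk2]
      have h2 := (abs_le.mp (K1 k)).1
      have h3 : u k = -A := le_antisymm (by linarith) h2
      rw [h3, abs_of_neg hneg]; ring
    · have h : A - u k ≤ 0 := by
        apply auxEps _ ((n:ℝ) * (1 + l2) / 2) (βh k) (by positivity) hpos
        intro ε hε hεle
        have hk2 := key k (-ε)
        have habs : |βh k + -ε| - |βh k| = -ε := by
          rw [abs_of_nonneg (by linarith : 0 ≤ βh k + -ε), abs_of_pos hpos]; ring
        rw [habs] at hk2
        linarith [hk2]
      have h2 := (abs_le.mp (K1 k)).2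
      have h3 : u k = A := le_antisymm h2 (by linarith)
      rw [h3, abs_of_pos hpos]
  -- bounds on correlations
  have hubB : ∀ k, |∑ i, X i k * y i| ≤ B := by
    intro k
    have h := hub k
    rw [div_le_iff₀ hαn] at h
    calc |∑ i, X i k * y i| ≤ lm * (α * (n:ℝ)) := h
    _ = B := by rw [hBdef]; ring
  have haSB : |aS| = B := by
    have h := (div_eq_iff (ne_of_gt hαn)).mp hatt
    rw [h, hBdef]; ring
  have haS0 : aS ≠ 0 := by
    intro h0
    rw [h0, abs_zero] at haSB
    exact absurd haSB.symm (ne_of_gt hB)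
  have hsaS : s * aS = B := by
    rcases lt_or_gt_of_ne haS0 with h | h
    · rw [hsdef, Real.sign_of_neg h, ← haSB, abs_of_neg h]; ring
    · rw [hsdef, Real.sign_of_pos h, ← haSB, abs_of_pos h]; ring
  have hsabs : |s| ≤ 1 := by
    rcases lt_or_gt_of_ne haS0 with h | h
    · rw [hsdef, Real.sign_of_neg h]; norm_num
    · rw [hsdef, Real.sign_of_pos h]; norm_num
  have hsus : s * u jstar ≤ A := by
    calc s * u jstar ≤ |s * u jstar| := le_abs_self _
    _ = |s| * |u jstar| := abs_mul _ _
    _ ≤ 1 * A := mul_le_mul hsabs (K1 jstar) (abs_nonneg _) zero_le_one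
    _ = A := one_mul _
  have F2 : c * (B * u jstar - A * aS) ≤ 0 := by
    have h1 : c * (B * u jstar - A * aS)
        = (α * lm / (1 + l2)) * (B * (s * u jstar) - A * (s * aS)) := by
      rw [hcdef]; ring
    rw [h1, hsaS]
    have h2 : B * (s * u jstar) - A * B ≤ 0 := by nlinarith [hsus, hB]
    have h3 : 0 ≤ α * lm / (1 + l2) := by positivity
    exact mul_nonpos_of_nonneg_of_nonpos h3 h2
  have hcNs : c * ((n:ℝ) * (1 + l2)) = (n:ℝ) * (s * α * lm) := by
    rw [hcdef]
    field_simp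
  have hss : s * s = 1 := by
    rcases lt_or_gt_of_ne haS0 with h | h
    · rw [hsdef, Real.sign_of_neg h]; norm_num
    · rw [hsdef, Real.sign_of_pos h]; norm_num
  have haSval : aS = s * B := by linear_combination s * hsaS - aS * hss
  have F3 : c * c * ((n:ℝ) * (1 + l2)) = c * aS := by
    have h1 : c * c * ((n:ℝ) * (1 + l2)) = c * ((n:ℝ) * (s * α * lm)) := by
      rw [mul_assoc, hcNs]
    rw [h1, haSval, hBdef]
    ring
  have F4 : ((n:ℝ) * (1 + l2)) * (c * aS) = (n:ℝ) ^ 2 * α ^ 2 * lm ^ 2 := by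
    calc ((n:ℝ) * (1 + l2)) * (c * aS) = (c * ((n:ℝ) * (1 + l2))) * aS := by ring
    _ = ((n:ℝ) * (s * α * lm)) * aS := by rw [hcNs]
    _ = (n:ℝ) * α * lm * (s * aS) := by ring
    _ = (n:ℝ) * α * lm * B := by rw [hsaS]
    _ = (n:ℝ) ^ 2 * α ^ 2 * lm ^ 2 := by rw [hBdef]; ring
  -- augmented vectors
  have hnl2 : (0:ℝ) ≤ (n:ℝ) * l2 := by positivity
  set sqv : ℝ := Real.sqrt ((n:ℝ) * l2) with hsqvdef
  have hsqv : sqv * sqv = (n:ℝ) * l2 := Real.mul_self_sqrt hnl2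
  clear_value sqv
  obtain ⟨ty, htydef⟩ : ∃ ty : Fin n ⊕ Fin p → ℝ, ty = Sum.elim y (fun _ => 0) := ⟨_, rfl⟩
  obtain ⟨tr, htrdef⟩ : ∃ tr : Fin n ⊕ Fin p → ℝ,
      tr = Sum.elim (fun i => y i - X.mulVec βh i) (fun l => -(sqv * βh l)) := ⟨_, rfl⟩
  obtain ⟨txs, htxsdef⟩ : ∃ txs : Fin n ⊕ Fin p → ℝ,
      txs = Sum.elim (fun i => X i jstar) (fun l => if l = jstar then sqv else 0) := ⟨_, rfl⟩
  obtain ⟨txj, htxjdef⟩ : ∃ txj : Fin n ⊕ Fin p → ℝ,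
      txj = Sum.elim (fun i => X i j) (fun l => if l = j then sqv else 0) := ⟨_, rfl⟩
  -- Gram identities
  have gTYTY : dotP ty ty = ∑ i, (y i) ^ 2 := by
    rw [dotP_split, htydef]
    simp only [Sum.elim_inl, Sum.elim_inr, mul_zero, Finset.sum_const_zero, add_zero]
    exact Finset.sum_congr rfl fun i _ => (pow_two _).symm
  have gTXSTXS : dotP txs txs = (n:ℝ) * (1 + l2) := by
    rw [dotP_split, htxsdef]
    simp only [Sum.elim_inl, Sum.elim_inr, mul_ite, ite_mul, mul_zero, zero_mul]
    rw [Finset.sum_ite_eq' Finset.univ jstar, hXsq jstar]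
    simp [hsqv]
    ring
  have gTXJTXJ : dotP txj txj = (n:ℝ) * (1 + l2) := by
    rw [dotP_split, htxjdef]
    simp only [Sum.elim_inl, Sum.elim_inr, mul_ite, ite_mul, mul_zero, zero_mul]
    rw [Finset.sum_ite_eq' Finset.univ j, hXsq j]
    simp [hsqv]
    ring
  have gTYTXS : dotP ty txs = aS := by
    rw [dotP_split, htydef, htxsdef]
    simp only [Sum.elim_inl, Sum.elim_inr, zero_mul, Finset.sum_const_zero, add_zero]
    rw [haSdef]
    exact Finset.sum_congr rfl fun i _ => mul_comm _ _
  have gTXJTY : dotP txj ty = aj := by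
    rw [dotP_split, htxjdef, htydef]
    simp only [Sum.elim_inl, Sum.elim_inr, mul_zero, Finset.sum_const_zero, add_zero]
    rw [hajdef]
  have gTRTXS : dotP tr txs = u jstar := by
    rw [dotP_split, htrdef, htxsdef]
    simp only [Sum.elim_inl, Sum.elim_inr, mul_ite, mul_zero]
    rw [Finset.sum_ite_eq' Finset.univ jstar]
    simp only [Finset.mem_univ, if_true, hudef]
    rw [show (∑ i, (y i - X.mulVec βh i) * X i jstar) = ∑ i, X i jstar * (y i - X.mulVec βh i)
      from Finset.sum_congr rfl fun i _ => mul_comm _ _]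
    linear_combination (-(βh jstar)) * hsqv
  have gTXJTR : dotP txj tr = u j := by
    rw [dotP_split, htxjdef, htrdef]
    simp only [Sum.elim_inl, Sum.elim_inr, ite_mul, zero_mul]
    rw [Finset.sum_ite_eq' Finset.univ j]
    simp only [Finset.mem_univ, if_true, hudef]
    linear_combination (-(βh j)) * hsqv
  have gTXJTXS : dotP txj txs = XjXs := by
    rw [dotP_split, htxjdef, htxsdef]
    simp only [Sum.elim_inl, Sum.elim_inr]
    have h2 : ∀ l : Fin p, (if l = j then sqv else 0) * (if l = jstar then sqv else 0) = 0 := by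
      intro l
      rcases eq_or_ne l j with rfl | h
      · simp [hj]
      · simp [h]
    simp only [h2, Finset.sum_const_zero, add_zero]
    rw [hXjXsdef]
  -- the D identity
  have hDsum : dotP (fun z => (-1:ℝ) * tr z + 1 * ty z + 0 * txs z)
      (fun z => B * tr z + (-A) * ty z + 0 * txs z)
      = ∑ k, βh k * (B * u k - A * (∑ i, X i k * y i)) := by
    have hfun : (fun z => (-1:ℝ) * tr z + 1 * ty z + 0 * txs z) = (fun z => ty z - tr z) := by
      funext z; ring
    have hfun2 : (fun z => B * tr z + (-A) * ty z + 0 * txs z)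
        = (fun z => B * tr z - A * ty z) := by
      funext z; ring
    rw [hfun, hfun2, dotP_split]
    simp only [htydef, htrdef, Sum.elim_inl, Sum.elim_inr]
    have h1 : ∀ i, (y i - (y i - X.mulVec βh i))
          * (B * (y i - X.mulVec βh i) - A * y i)
        = ∑ k, βh k * (X i k * (B * (y i - X.mulVec βh i) - A * y i)) := by
      intro i
      have hmv : y i - (y i - X.mulVec βh i) = ∑ k, X i k * βh k := by
        simp [Matrix.mulVec, dotProduct]
      rw [hmv, Finset.sum_mul]
      exact Finset.sum_congr rfl fun k _ => by ring
    rw [Finset.sum_congr rfl fun i _ => h1 i, Finset.sum_comm]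
    have h2 : ∀ l : Fin p, (0 - -(sqv * βh l)) * (B * -(sqv * βh l) - A * 0)
        = -(B * ((n:ℝ) * l2) * (βh l * βh l)) := by
      intro l
      have e : (0 - -(sqv * βh l)) * (B * -(sqv * βh l) - A * 0)
          = -(B * (sqv * sqv) * (βh l * βh l)) := by ring
      rw [e, hsqv]
    rw [Finset.sum_congr rfl fun l _ => h2 l, ← Finset.sum_add_distrib]
    refine Finset.sum_congr rfl fun k _ => ?_
    simp only [hudef]
    have h3 : ∑ i, βh k * (X i k * (B * (y i - X.mulVec βh i) - A * y i))
        = βh k * (B * (∑ i, X i k * (y i - X.mulVec βh i)) - A * (∑ i, X i k * y i)) := by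
      rw [Finset.mul_sum, Finset.mul_sum, ← Finset.sum_sub_distrib, Finset.mul_sum]
      exact Finset.sum_congr rfl fun i _ => by ring
    rw [h3]
    ring
  -- nonnegativity of the primal-dual gap term
  have hSb : 0 ≤ ∑ k, βh k * (B * u k - A * (∑ i, X i k * y i)) := by
    apply Finset.sum_nonneg
    intro k _
    rcases eq_or_ne (βh k) 0 with h0 | h0
    · simp [h0]
    · have h2 := K2 k h0
      have h4 : βh k * (∑ i, X i k * y i) ≤ |βh k| * B := by
        calc βh k * (∑ i, X i k * y i) ≤ |βh k * (∑ i, X i k * y i)| := le_abs_self _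
        _ = |βh k| * |∑ i, X i k * y i| := abs_mul _ _
        _ ≤ |βh k| * B := mul_le_mul_of_nonneg_left (hubB k) (abs_nonneg _)
      have h5 : A * (βh k * (∑ i, X i k * y i)) ≤ A * (|βh k| * B) :=
        mul_le_mul_of_nonneg_left h4 hA.le
      have h6 : B * (βh k * u k) = B * (|βh k| * A) := by rw [h2]
      linarith only [h5, h6]
  have hDexp := dotP_comb tr ty txs (-1) 1 0 B (-A) 0
  have hDeq := hDexp.symm.trans hDsum
  rw [gTYTY, gTRTXS, gTYTXS] at hDeq
  have hBS : 0 ≤ B * ((-1) * B * dotP tr tr + 1 * (-A) * (∑ i, (y i) ^ 2) + 0 * 0 * dotP txs txs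
      + ((-1) * (-A) + 1 * B) * dotP tr ty + ((-1) * 0 + 0 * B) * (u jstar)
      + (1 * 0 + 0 * (-A)) * aS) := by
    rw [hDeq]
    exact mul_nonneg hB.le hSb
  -- W and its expansion
  have hWexp := dotP_comb tr ty txs (2*B) (-(A+B)) ((B-A)*c) (2*B) (-(A+B)) ((B-A)*c)
  rw [gTYTY, gTRTXS, gTYTXS, gTXSTXS] at hWexp
  have hQexp := dotP_comb tr ty txs 0 1 (-c) 0 1 (-c)
  rw [gTYTY, gTRTXS, gTYTXS, gTXSTXS] at hQexp
  have hF2' : (B - A) * (c * (B * u jstar - A * aS)) ≤ 0 :=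
    mul_nonpos_of_nonneg_of_nonpos (by linarith only [hAB]) F2
  have hWQ : dotP (fun z => (2*B) * tr z + (-(A+B)) * ty z + ((B-A)*c) * txs z)
      (fun z => (2*B) * tr z + (-(A+B)) * ty z + ((B-A)*c) * txs z)
      ≤ (B-A)^2 * dotP (fun z => (0:ℝ) * tr z + 1 * ty z + (-c) * txs z)
        (fun z => (0:ℝ) * tr z + 1 * ty z + (-c) * txs z) := by
    rw [hWexp, hQexp]
    linarith only [hBS, hF2']
  have hQnn : 0 ≤ dotP (fun z => (0:ℝ) * tr z + 1 * ty z + (-c) * txs z)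
      (fun z => (0:ℝ) * tr z + 1 * ty z + (-c) * txs z) := dotP_self_nonneg _
  have hCS := dotP_CS txj (fun z => (2*B) * tr z + (-(A+B)) * ty z + ((B-A)*c) * txs z)
  rw [gTXJTXJ] at hCS
  have he := dotP_comb_left txj tr ty txs (2*B) (-(A+B)) ((B-A)*c)
  rw [gTXJTR, gTXJTY, gTXJTXS] at he
  -- the value of the sqrt argument
  have hArg : (n:ℝ) * (∑ i, (y i) ^ 2) * (1 + l2) - (n:ℝ) ^ 2 * α ^ 2 * lm ^ 2
      = ((n:ℝ) * (1 + l2)) * dotP (fun z => (0:ℝ) * tr z + 1 * ty z + (-c) * txs z)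
        (fun z => (0:ℝ) * tr z + 1 * ty z + (-c) * txs z) := by
    rw [hQexp]
    linear_combination F4 - ((n:ℝ) * (1 + l2)) * F3
  -- bound |dotP txj W|
  have hBA : (0:ℝ) ≤ B - A := by linarith only [hAB]
  have h7 : (dotP txj (fun z => (2*B) * tr z + (-(A+B)) * ty z + ((B-A)*c) * txs z)) ^ 2
      ≤ (B-A)^2 * ((n:ℝ) * (∑ i, (y i) ^ 2) * (1 + l2) - (n:ℝ) ^ 2 * α ^ 2 * lm ^ 2) := by
    rw [hArg]
    calc (dotP txj (fun z => (2*B) * tr z + (-(A+B)) * ty z + ((B-A)*c) * txs z)) ^ 2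
        ≤ (n:ℝ) * (1 + l2) * dotP (fun z => (2*B) * tr z + (-(A+B)) * ty z + ((B-A)*c) * txs z)
          (fun z => (2*B) * tr z + (-(A+B)) * ty z + ((B-A)*c) * txs z) := hCS
    _ ≤ (n:ℝ) * (1 + l2) * ((B-A)^2 * dotP (fun z => (0:ℝ) * tr z + 1 * ty z + (-c) * txs z)
          (fun z => (0:ℝ) * tr z + 1 * ty z + (-c) * txs z)) :=
        mul_le_mul_of_nonneg_left hWQ (by positivity)
    _ = (B-A)^2 * (((n:ℝ) * (1 + l2)) * dotP (fun z => (0:ℝ) * tr z + 1 * ty z + (-c) * txs z)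
          (fun z => (0:ℝ) * tr z + 1 * ty z + (-c) * txs z)) := by ring
  have habse : |dotP txj (fun z => (2*B) * tr z + (-(A+B)) * ty z + ((B-A)*c) * txs z)|
      ≤ (B-A) * Real.sqrt ((n:ℝ) * (∑ i, (y i) ^ 2) * (1 + l2)
          - (n:ℝ) ^ 2 * α ^ 2 * lm ^ 2) := by
    calc |dotP txj (fun z => (2*B) * tr z + (-(A+B)) * ty z + ((B-A)*c) * txs z)|
        = Real.sqrt ((dotP txj (fun z => (2*B) * tr z + (-(A+B)) * ty z
            + ((B-A)*c) * txs z)) ^ 2) := (Real.sqrt_sq_eq_abs _).symm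
    _ ≤ Real.sqrt ((B-A)^2 * ((n:ℝ) * (∑ i, (y i) ^ 2) * (1 + l2)
          - (n:ℝ) ^ 2 * α ^ 2 * lm ^ 2)) := Real.sqrt_le_sqrt h7
    _ = (B-A) * Real.sqrt ((n:ℝ) * (∑ i, (y i) ^ 2) * (1 + l2)
          - (n:ℝ) ^ 2 * α ^ 2 * lm ^ 2) := by
        rw [Real.sqrt_mul (sq_nonneg _), Real.sqrt_sq hBA]
  -- combine with the rule
  have h8 : |(A+B) * aj - (B-A) * c * XjXs|
      < 2 * A * B - (B-A) * Real.sqrt ((n:ℝ) * (∑ i, (y i) ^ 2) * (1 + l2)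
          - (n:ℝ) ^ 2 * α ^ 2 * lm ^ 2) := by
    have e1 : (A+B) * aj - (B-A) * c * XjXs
        = (α * (n:ℝ)) * ((lm + lam) * aj - (lm - lam) * c * XjXs) := by
      rw [hAdef, hBdef]; ring
    rw [e1, abs_mul, abs_of_pos hαn]
    have h9 := mul_lt_mul_of_pos_left hrule hαn
    calc (α * (n:ℝ)) * |(lm + lam) * aj - (lm - lam) * c * XjXs|
        < (α * (n:ℝ)) * (2 * (n:ℝ) * α * lam * lm
            - (lm - lam) * Real.sqrt ((n:ℝ) * (∑ i, (y i) ^ 2) * (1 + l2)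
              - (n:ℝ) ^ 2 * α ^ 2 * lm ^ 2)) := h9
    _ = 2 * A * B - (B-A) * Real.sqrt ((n:ℝ) * (∑ i, (y i) ^ 2) * (1 + l2)
          - (n:ℝ) ^ 2 * α ^ 2 * lm ^ 2) := by
        rw [hAdef, hBdef]; ring
  have h10 : |2 * B * u j| < 2 * A * B := by
    have e2 : 2 * B * u j = dotP txj (fun z => (2*B) * tr z + (-(A+B)) * ty z
        + ((B-A)*c) * txs z) + ((A+B) * aj - (B-A) * c * XjXs) := by
      rw [he]; ring
    rw [e2]
    calc |_ + _| ≤ |dotP txj (fun z => (2*B) * tr z + (-(A+B)) * ty z + ((B-A)*c) * txs z)|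
        + |(A+B) * aj - (B-A) * c * XjXs| := abs_add_le _ _
    _ < 2 * A * B := by linarith only [habse, h8]
  have h11 : |u j| < A := by
    have h12 : |2 * B * u j| = 2 * B * |u j| := by
      rw [abs_mul, abs_of_pos (by positivity : (0:ℝ) < 2 * B)]
    rw [h12] at h10
    have := (mul_lt_mul_iff_right₀ (by positivity : (0:ℝ) < 2 * B)).mp
      (by linarith only [h10] : 2 * B * |u j| < 2 * B * A)
    exact this
  by_contra hjne
  have h14 := K2 j hjne
  have h15 : |βh j| * |u j| = |βh j| * A := by
    have h16 := congrArg abs h14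
    rw [abs_mul, abs_of_nonneg (mul_nonneg (abs_nonneg _) hA.le)] at h16
    exact h16
  have h17 : |u j| = A := mul_left_cancel₀ (abs_ne_zero.mpr hjne) h15
  exact absurd h17 (ne_of_lt h11)
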